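/- arXiv:2304.12683 — 3 statements merged into one kernel-verified Lean document; each statement's English description precedes it below -/
import Mathlib

section
/- Let a : [t_min, t_max] → ℝ³ be a C¹ curve and x ∈ ℝ³ a point not on the curve, and let c > 0. If |a'(t)| < c for all t ∈ [t_min, t_max], then the function h(t) = t + c⁻¹|x - a(t)| is strictly increasing on [t_min, t_max]. -/
/-!
A curve moving slower than `c` covers a chord `|a(t) - a(s)| < c (t - s)` (apply the scalar
mean value theorem to a norming functional of `a(t) - a(s)`). Together with the triangle
inequality `|x - a(s)| ≤ |x - a(t)| + |a(t) - a(s)|` this gives `h(s) < h(t)` for `s < t`.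
-/

open Set

theorem Convex.norm_image_sub_lt_mul_sub {E : Type*} [NormedAddCommGroup E] [NormedSpace ℝ E]
    {f f' : ℝ → E} {D : Set ℝ} (hD : Convex ℝ D) (hf : ∀ t ∈ D, HasDerivAt f (f' t) t)
    {C : ℝ} (hf' : ∀ t ∈ D, ‖f' t‖ < C) {s t : ℝ} (hs : s ∈ D) (ht : t ∈ D) (hst : s < t) :
    ‖f t - f s‖ < C * (t - s) := by
  by_cases hzero : ‖f t - f s‖ = 0
  · rw [hzero]
    exact mul_pos ((norm_nonneg _).trans_lt (hf' s hs)) (sub_pos.2 hst)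
  obtain ⟨g, hg_norm, hg_chord⟩ := exists_dual_vector ℝ (f t - f s) hzero
  have hgf : ∀ u ∈ D, HasDerivAt (fun u => g (f u)) (g (f' u)) u := fun u hu =>
    g.hasFDerivAt.comp_hasDerivAt u (hf u hu)
  have hderiv_lt : ∀ u ∈ interior D, deriv (fun u => g (f u)) u < C := by
    intro u hu
    have hu' := interior_subset hu
    rw [(hgf u hu').deriv]
    calc g (f' u) ≤ ‖g (f' u)‖ := le_abs_self _
      _ ≤ ‖g‖ * ‖f' u‖ := g.le_opNorm _
      _ < C := by rw [hg_norm, one_mul]; exact hf' u hu'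
  have hgrowth := hD.image_sub_lt_mul_sub_of_deriv_lt
    (fun u hu => (hgf u hu).continuousAt.continuousWithinAt)
    (fun u hu => (hgf u (interior_subset hu)).differentiableAt.differentiableWithinAt)
    hderiv_lt s hs t ht hst
  rwa [← map_sub, hg_chord] at hgrowth

theorem Convex.strictMonoOn_add_inv_mul_norm_sub {E : Type*} [NormedAddCommGroup E]
    [NormedSpace ℝ E] {a a' : ℝ → E} {D : Set ℝ} (hD : Convex ℝ D) {c : ℝ} (hc : 0 < c)
    (ha : ∀ t ∈ D, HasDerivAt a (a' t) t) (hlt : ∀ t ∈ D, ‖a' t‖ < c) (x : E) :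
    StrictMonoOn (fun t => t + c⁻¹ * ‖x - a t‖) D := by
  intro s hs t ht hst
  have hchord := hD.norm_image_sub_lt_mul_sub ha hlt hs ht hst
  have htri : ‖x - a s‖ ≤ ‖x - a t‖ + ‖a t - a s‖ := norm_sub_le_norm_sub_add_norm_sub _ _ _
  calc s + c⁻¹ * ‖x - a s‖ < s + c⁻¹ * (‖x - a t‖ + c * (t - s)) := by gcongr; linarith
    _ = t + c⁻¹ * ‖x - a t‖ := by field_simp; ring

theorem stmt0_general (tmin tmax c : ℝ) (hc : 0 < c)
    (a a' : ℝ → EuclideanSpace ℝ (Fin 3))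
    (ha : ∀ t, HasDerivAt a (a' t) t)
    (x : EuclideanSpace ℝ (Fin 3))
    (hlt : ∀ t ∈ Icc tmin tmax, ‖a' t‖ < c) :
    StrictMonoOn (fun t => t + c⁻¹ * ‖x - a t‖) (Icc tmin tmax) :=
  (convex_Icc tmin tmax).strictMonoOn_add_inv_mul_norm_sub hc (fun t _ => ha t) hlt x

/-- If `|a'(t)| < c` on `[tmin, tmax]` and `x` is off the curve, then
`h(t) = t + c⁻¹ |x - a(t)|` is strictly increasing on `[tmin, tmax]`. -/
theorem stmt0 (tmin tmax c : ℝ) (htt : tmin < tmax) (hc : 0 < c)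
    (a a' : ℝ → EuclideanSpace ℝ (Fin 3))
    (ha : ∀ t, HasDerivAt a (a' t) t) (ha' : Continuous a')
    (x : EuclideanSpace ℝ (Fin 3))
    (hx : ∀ t ∈ Icc tmin tmax, x ≠ a t)
    (hlt : ∀ t ∈ Icc tmin tmax, ‖a' t‖ < c) :
    StrictMonoOn (fun t => t + c⁻¹ * ‖x - a t‖) (Icc tmin tmax) :=
  stmt0_general tmin tmax c hc a a' ha x hlt
end

section
/- Let a(t) = (0, 0, 2t) for t ∈ [1, 2] and c = 1. A point x = (x₁, x₂, x₃) ∈ ℝ³ with |x| = 6 and x₃ ∈ [-6, 3] is observable; more precisely, for such x the function h(t) = t + |x - a(t)| is monotonically increasing on [1, 2] and satisfies h(2) - h(1) ≥ 1. -/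
open Set

/-!
Expanding the square, `‖x - a(t)‖² = ‖x‖² - 4 t x₃ + 4 t²`. Comparing the values at `t = 1` and
`t = 2` gives `‖x - a(1)‖ ≤ ‖x - a(2)‖` exactly when `x₃ ≤ 3`. For monotonicity of
`h(t) = t + ‖x - a(t)‖` one squares `‖x - a(s)‖ ≤ (t - s) + ‖x - a(t)‖`; after cancelling `t - s`
it reduces to `2 (x₃ - s - t) ≤ ‖x - a(t)‖`, which only has content when `2 < x₃ ≤ 3`, and then
`‖x - a(t)‖² ≥ ‖x‖² - x₃² ≥ 27`.
-/

noncomputable def a4 (t : ℝ) : EuclideanSpace ℝ (Fin 3) :=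
  (WithLp.equiv 2 (Fin 3 → ℝ)).symm ![0, 0, 2 * t]

lemma inner_a4 (x : EuclideanSpace ℝ (Fin 3)) (t : ℝ) : inner ℝ x (a4 t) = 2 * t * x 2 := by
  simp [a4, PiLp.inner_apply, Fin.sum_univ_three]

lemma norm_a4_sq (t : ℝ) : ‖a4 t‖ ^ 2 = 4 * t ^ 2 := by
  simp [EuclideanSpace.norm_sq_eq, a4, Fin.sum_univ_three]; ring

lemma norm_sub_a4_sq (x : EuclideanSpace ℝ (Fin 3)) (t : ℝ) :
    ‖x - a4 t‖ ^ 2 = ‖x‖ ^ 2 - 4 * t * x 2 + 4 * t ^ 2 := by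
  rw [norm_sub_sq_real, inner_a4, norm_a4_sq]; ring

lemma norm_sub_a4_one_le_two (x : EuclideanSpace ℝ (Fin 3)) (hx : x 2 ≤ 3) :
    ‖x - a4 1‖ ≤ ‖x - a4 2‖ := by
  rw [← sq_le_sq₀ (norm_nonneg _) (norm_nonneg _), norm_sub_a4_sq, norm_sub_a4_sq]
  linarith

lemma norm_sub_a4_le_add (x : EuclideanSpace ℝ (Fin 3)) (hx : ‖x‖ = 6) (hx3 : x 2 ≤ 3)
    {s t : ℝ} (hs : 1 ≤ s) (hst : s ≤ t) :
    ‖x - a4 s‖ ≤ (t - s) + ‖x - a4 t‖ := by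
  have hcoord : |x 2| ≤ ‖x‖ := by simpa using PiLp.norm_apply_le x 2
  have hdist : 2 * (x 2 - s - t) ≤ ‖x - a4 t‖ := by
    rcases le_or_gt (x 2 - s - t) 0 with h | h
    · linarith [norm_nonneg (x - a4 t)]
    · rw [← sq_le_sq₀ (by linarith) (norm_nonneg _), norm_sub_a4_sq, hx]
      nlinarith [abs_le.mp (hx ▸ hcoord)]
  rw [← sq_le_sq₀ (norm_nonneg _) (by linarith [norm_nonneg (x - a4 t)]), add_sq,
    norm_sub_a4_sq, norm_sub_a4_sq x t]
  nlinarith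

lemma monotoneOn_add_norm_sub_a4 (x : EuclideanSpace ℝ (Fin 3)) (hx : ‖x‖ = 6) (hx3 : x 2 ≤ 3) :
    MonotoneOn (fun t => t + ‖x - a4 t‖) (Ici 1) := by
  intro s hs t _ hst
  have := norm_sub_a4_le_add x hx hx3 hs hst
  dsimp only
  linarith

/-- For the straight-line trajectory `a(t) = (0,0,2t)`, `t ∈ [1,2]`, `c = 1`: every
`x` with `|x| = 6` and `x₃ ∈ [-6, 3]` is observable; more precisely,
`h(t) = t + |x - a(t)|` is monotonically increasing on `[1,2]` and `h(2) - h(1) ≥ 1`. -/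
theorem stmt4 (x : EuclideanSpace ℝ (Fin 3)) (hx : ‖x‖ = 6)
    (hx3 : x 2 ∈ Icc (-6 : ℝ) 3) :
    MonotoneOn (fun t => t + ‖x - a4 t‖) (Icc (1 : ℝ) 2) ∧
    1 ≤ (2 + ‖x - a4 2‖) - (1 + ‖x - a4 1‖) :=
  ⟨(monotoneOn_add_norm_sub_a4 x hx hx3.2).mono Icc_subset_Ici_self,
    by linarith [norm_sub_a4_one_le_two x hx3.2]⟩
end

section
/- Let N : L²(0,K) → L²(0,K) be defined by (Nφ)(τ) = ∫₀^K u(κ+τ-s) φ(s) ds where u(ω) = ∫_{t_min}^{t_max} (8π²|x-a(t)|)⁻¹ e^{iω(t + c⁻¹|x-a(t)|)} ℓ(t) dt. Then N = L T L*, where (Lψ)(τ) = ∫_{t_min}^{t_max} e^{iτ(t+c⁻¹|x-a(t)|)} ψ(t) dt, (Tφ)(t) = (8π²|x-a(t)|)⁻¹ e^{iκ(t+c⁻¹|x-a(t)|)} ℓ(t) φ(t), and (L*φ)(t) = ∫₀^K e^{-is(t+c⁻¹|x-a(t)|)} φ(s) ds is the adjoint of L. -/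
open Set MeasureTheory Real

/-- Factorization `N = L T L*` of the near-field operator, expressed pointwise:
for bounded continuous densities `φ`,
`(Nφ)(τ) = ∫₀^K u(κ+τ-s) φ(s) ds` equals `(L T L* φ)(τ)`, where
`(Lψ)(τ) = ∫_{tmin}^{tmax} e^{iτ h(t)} ψ(t) dt`,
`(Tφ)(t) = (8π²|x-a(t)|)⁻¹ e^{iκ h(t)} ℓ(t) φ(t)`,
`(L*φ)(t) = ∫₀^K e^{-is h(t)} φ(s) ds`, with `h(t) = t + c⁻¹|x - a(t)|`. -/
theorem stmt8 (tmin tmax c κ K : ℝ) (htt : tmin < tmax) (hc : 0 < c)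
    (hκ : 0 < κ) (hK : 0 < K)
    (a : ℝ → EuclideanSpace ℝ (Fin 3)) (hca : ContinuousOn a (Icc tmin tmax))
    (x : EuclideanSpace ℝ (Fin 3)) (hx : x ∉ a '' Icc tmin tmax)
    (ℓ : ℝ → ℝ) (hℓ : Continuous ℓ)
    (u : ℝ → ℂ)
    (hu : ∀ ω : ℝ, u ω = ∫ t in tmin..tmax,
      ((8 * π ^ 2 * ‖x - a t‖ : ℝ) : ℂ)⁻¹ *
        Complex.exp (Complex.I * (ω : ℂ) * ((t + c⁻¹ * ‖x - a t‖ : ℝ) : ℂ)) * (ℓ t : ℂ))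
    (φ : ℝ → ℂ) (hφ : Continuous φ) (τ : ℝ) :
    ∫ s in (0 : ℝ)..K, u (κ + τ - s) * φ s
    = ∫ t in tmin..tmax,
        Complex.exp (Complex.I * (τ : ℂ) * ((t + c⁻¹ * ‖x - a t‖ : ℝ) : ℂ)) *
        (((8 * π ^ 2 * ‖x - a t‖ : ℝ) : ℂ)⁻¹ *
          Complex.exp (Complex.I * (κ : ℂ) * ((t + c⁻¹ * ‖x - a t‖ : ℝ) : ℂ)) * (ℓ t : ℂ) *
          ∫ s in (0 : ℝ)..K,
            Complex.exp (-Complex.I * (s : ℂ) * ((t + c⁻¹ * ‖x - a t‖ : ℝ) : ℂ)) * φ s) := by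
  have h0K : (0:ℝ) ≤ K := hK.le
  have htt' : tmin ≤ tmax := htt.le
  set h : ℝ → ℝ := fun t => t + c⁻¹ * ‖x - a t‖ with hh
  set G : ℝ × ℝ → ℂ := fun p =>
    ((8 * π ^ 2 * ‖x - a p.2‖ : ℝ) : ℂ)⁻¹ *
      Complex.exp (Complex.I * ((κ + τ - p.1 : ℝ) : ℂ) * ((h p.2 : ℝ) : ℂ)) * (ℓ p.2 : ℂ) * φ p.1
    with hG
  -- continuity facts
  have hna : ∀ t ∈ Icc tmin tmax, ‖x - a t‖ ≠ 0 := by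
    intro t ht hn
    apply hx
    exact ⟨t, ht, by
      have := norm_eq_zero.mp hn
      have := sub_eq_zero.mp this
      exact this.symm⟩
  have hGcont : ContinuousOn G (Icc 0 K ×ˢ Icc tmin tmax) := by
    have hacont : ContinuousOn (fun p : ℝ × ℝ => a p.2) (Icc 0 K ×ˢ Icc tmin tmax) := by
      apply hca.comp continuous_snd.continuousOn
      intro p hp; exact hp.2
    have hnorm : ContinuousOn (fun p : ℝ × ℝ => ‖x - a p.2‖) (Icc 0 K ×ˢ Icc tmin tmax) :=
      (continuousOn_const.sub hacont).norm
    have hinv : ContinuousOn (fun p : ℝ × ℝ => ((8 * π ^ 2 * ‖x - a p.2‖ : ℝ) : ℂ)⁻¹)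
        (Icc 0 K ×ˢ Icc tmin tmax) := by
      apply ContinuousOn.inv₀
      · exact Complex.continuous_ofReal.comp_continuousOn
          (continuousOn_const.mul hnorm)
      · intro p hp
        simp only [ne_eq, Complex.ofReal_eq_zero]
        have h8 : (8 * π ^ 2 : ℝ) ≠ 0 := by positivity
        exact mul_ne_zero h8 (hna p.2 hp.2)
    have hhcont : ContinuousOn (fun p : ℝ × ℝ => (h p.2 : ℂ)) (Icc 0 K ×ˢ Icc tmin tmax) :=
      Complex.continuous_ofReal.comp_continuousOn
        (continuous_snd.continuousOn.add (continuousOn_const.mul hnorm))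
    apply ContinuousOn.mul
    apply ContinuousOn.mul
    apply ContinuousOn.mul hinv
    · apply Complex.continuous_exp.comp_continuousOn
      apply ContinuousOn.mul _ hhcont
      exact continuousOn_const.mul
        (Complex.continuous_ofReal.comp_continuousOn
          (continuousOn_const.sub continuous_fst.continuousOn))
    · exact (Complex.continuous_ofReal.comp (hℓ.comp continuous_snd)).continuousOn
    · exact (hφ.comp continuous_fst).continuousOn
  have hGint : IntegrableOn G (Icc 0 K ×ˢ Icc tmin tmax) := by
    exact hGcont.integrableOn_compact (isCompact_Icc.prod isCompact_Icc)
  have hGint' : Integrable G ((volume.restrict (Ioc 0 K)).prod (volume.restrict (Ioc tmin tmax))) := by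
    rw [Measure.prod_restrict]
    exact hGint.mono_set (Set.prod_mono Ioc_subset_Icc_self Ioc_subset_Icc_self)
  -- Fubini
  have swap := MeasureTheory.integral_integral_swap (μ := volume.restrict (Ioc 0 K))
    (ν := volume.restrict (Ioc tmin tmax)) (f := fun s t => G (s, t)) hGint'
  -- rewrite interval integrals as set integrals
  rw [intervalIntegral.integral_of_le h0K, intervalIntegral.integral_of_le htt']
  calc ∫ s in Ioc 0 K, u (κ + τ - s) * φ s
      = ∫ s in Ioc 0 K, ∫ t in Ioc tmin tmax, G (s, t) := by
        apply integral_congr_ae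
        filter_upwards with s
        rw [hu, intervalIntegral.integral_of_le htt', ← integral_mul_const]
    _ = ∫ t in Ioc tmin tmax, ∫ s in Ioc 0 K, G (s, t) := swap
    _ = _ := by
        apply integral_congr_ae
        filter_upwards with t
        rw [intervalIntegral.integral_of_le h0K, ← integral_const_mul, ← integral_const_mul]
        apply integral_congr_ae
        filter_upwards with s
        simp only [hG]
        rw [show Complex.I * ((κ + τ - s : ℝ) : ℂ) * ((h t : ℝ) : ℂ)
            = Complex.I * (τ:ℂ) * ((h t : ℝ):ℂ) + (Complex.I * (κ:ℂ) * ((h t:ℝ):ℂ)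
              + (-Complex.I * (s:ℂ) * ((h t:ℝ):ℂ))) by push_cast; ring,
          Complex.exp_add, Complex.exp_add]
        ring
end
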